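/- arXiv:1305.0799 — 2 statements merged into one kernel-verified Lean document; each statement's English description precedes it below -/
import Mathlib

section
/- For any set V of pairs (X,v) with X a g-tuple of n×n real matrices and v ∈ ℝ^{ℓn} (n ranging over ℕ), the vanishing module I(V) = {p ∈ R^{1×ℓ}⟨x,x*⟩ : p(X)v = 0 for all (X,v) ∈ V} is a real left module: if Σ_i p_i*p_i ∈ R^{ℓ×1}I(V) + I(V)*R^{1×ℓ}, then each p_i ∈ I(V). -/
open scoped BigOperators

namespace NSS

/-- Words in the `2g` free letters `x_1,…,x_g,x_1^*,…,x_g^*`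
(a letter is a pair of an index and a `Bool`: `false` = unstarred, `true` = starred). -/
abbrev Word (g : ℕ) := FreeMonoid (Fin g × Bool)

/-- The free `*`-algebra `ℝ⟨x,x*⟩`. -/
abbrev NC (g : ℕ) := MonoidAlgebra ℝ (Word g)

/-- `ν × ℓ` matrices of noncommutative polynomials. -/
abbrev NCMat (g ν ℓ : ℕ) := Matrix (Fin ν) (Fin ℓ) (NC g)

/-- The involution on words: reverse the word and swap starred/unstarred letters. -/
def wordStar {g : ℕ} (w : Word g) : Word g :=
  FreeMonoid.ofList (((FreeMonoid.toList w).map (fun p => (p.1, !p.2))).reverse)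

/-- The involution on `ℝ⟨x,x*⟩`. -/
noncomputable def ncStar {g : ℕ} (p : NC g) : NC g :=
  MonoidAlgebra.ofCoeff (Finsupp.mapDomain wordStar p.coeff)

/-- The involution on matrix polynomials: transpose and apply `ncStar` entrywise. -/
noncomputable def matStar {g ν ℓ : ℕ} (p : NCMat g ν ℓ) : NCMat g ℓ ν :=
  Matrix.of fun i j => ncStar (p j i)

/-- The left action of a scalar polynomial on a matrix polynomial
(entrywise left multiplication, identifying `q` with `I ⊗ q`). -/
noncomputable def leftMul {g ν ℓ : ℕ} (q : NC g) (p : NCMat g ν ℓ) : NCMat g ν ℓ :=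
  Matrix.of fun i j => q * p i j

/-- A constant real matrix, viewed as a matrix of noncommutative polynomials. -/
noncomputable def constMat {g m n : ℕ} (A : Matrix (Fin m) (Fin n) ℝ) : NCMat g m n :=
  A.map (algebraMap ℝ (NC g))

/-- The space `ℝ^{ℓ×1}·I + I^*·ℝ^{1×ℓ}`. -/
noncomputable def realPart {g ℓ : ℕ} (I : Set (NCMat g 1 ℓ)) : Submodule ℝ (NCMat g ℓ ℓ) :=
  Submodule.span ℝ
    ({m | ∃ B : Matrix (Fin ℓ) (Fin 1) ℝ, ∃ a ∈ I, m = constMat B * a} ∪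
     {m | ∃ B : Matrix (Fin 1) (Fin ℓ) ℝ, ∃ a ∈ I, m = matStar a * constMat B})

/-- Left `ℝ⟨x,x*⟩`-submodules of `ℝ^{1×ℓ}⟨x,x*⟩`. -/
def IsLeftSubmodule {g ℓ : ℕ} (I : Set (NCMat g 1 ℓ)) : Prop :=
  0 ∈ I ∧ (∀ a b, a ∈ I → b ∈ I → a + b ∈ I) ∧
    (∀ (r : ℝ) a, a ∈ I → r • a ∈ I) ∧ ∀ (q : NC g) a, a ∈ I → leftMul q a ∈ I

/-- A left module `I` is *real* if any finite sum of hermitian squares lying in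
`ℝ^{ℓ×1}·I + I^*·ℝ^{1×ℓ}` has all its terms in `I`. -/
def IsReal {g ℓ : ℕ} (I : Set (NCMat g 1 ℓ)) : Prop :=
  ∀ (n : ℕ) (p : Fin n → NCMat g 1 ℓ),
    (∑ i, matStar (p i) * p i) ∈ realPart I → ∀ i, p i ∈ I

/-- The monomial `e_j ⊗ w ∈ ℝ^{1×ℓ}⟨x,x*⟩`. -/
noncomputable def rowMono {g ℓ : ℕ} (j : Fin ℓ) (w : Word g) : NCMat g 1 ℓ :=
  Matrix.of fun _ j' => if j' = j then (MonoidAlgebra.single w (1:ℝ) : NC g) else 0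

/-- The left `ℝ⟨x,x*⟩`-submodule generated by a set. -/
def leftSpan {g ℓ : ℕ} (G : Set (NCMat g 1 ℓ)) : Set (NCMat g 1 ℓ) :=
  ⋂₀ {J | IsLeftSubmodule J ∧ G ⊆ J}


/-- Evaluation of a word at a tuple `X` of `n×n` real matrices
(`x_i ↦ X i`, `x_i* ↦ (X i)ᵀ`). -/
noncomputable def wordEval {g n : ℕ} (X : Fin g → Matrix (Fin n) (Fin n) ℝ) (w : Word g) :
    Matrix (Fin n) (Fin n) ℝ :=
  ((FreeMonoid.toList w).map (fun p => if p.2 then Matrix.transpose (X p.1) else X p.1)).prod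

/-- Evaluation of a scalar noncommutative polynomial. -/
noncomputable def ncEval {g n : ℕ} (X : Fin g → Matrix (Fin n) (Fin n) ℝ) (p : NC g) :
    Matrix (Fin n) (Fin n) ℝ :=
  Finsupp.sum p.coeff fun w c => c • wordEval X w

/-- `p(X)v` for a row-vector polynomial `p ∈ ℝ^{1×ℓ}⟨x,x*⟩` and `v ∈ ℝ^{ℓn}`
(written as `ℓ` blocks in `ℝ^n`). -/
noncomputable def rowEval {g ℓ n : ℕ} (X : Fin g → Matrix (Fin n) (Fin n) ℝ)
    (p : NCMat g 1 ℓ) (v : Fin ℓ → Fin n → ℝ) : Fin n → ℝ :=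
  ∑ j, (ncEval X (p 0 j)).mulVec (v j)

/-- The vanishing left module of a set of points. -/
noncomputable def vanishingModule {g ℓ : ℕ}
    (V : Set (Σ n : ℕ, (Fin g → Matrix (Fin n) (Fin n) ℝ) × (Fin ℓ → Fin n → ℝ))) :
    Set (NCMat g 1 ℓ) :=
  {p | ∀ t ∈ V, rowEval t.2.1 p t.2.2 = 0}

/-!
Fix a point `(X, v)` and consider the linear functional `m ↦ vᵀ m(X) v` on `ℓ × ℓ` matrix
polynomials. Since evaluation turns the involution into transposition, it sends `a^* b` to
`⟨a(X)v, b(X)v⟩`. Hence it vanishes on `ℝ^{ℓ×1}·I(V) + I(V)^*·ℝ^{1×ℓ}` (every generator has a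
factor from `I(V)`, which kills `v`), while on `Σ pᵢ^* pᵢ` it equals `Σ ‖pᵢ(X)v‖²`.
-/

open Matrix

section Evaluation

variable {g n : ℕ} (X : Fin g → Matrix (Fin n) (Fin n) ℝ)

noncomputable def wordEvalHom : Word g →* Matrix (Fin n) (Fin n) ℝ where
  toFun := wordEval X
  map_one' := by simp [wordEval]
  map_mul' _ _ := by simp [wordEval]

noncomputable def ncEvalAlgHom : NC g →ₐ[ℝ] Matrix (Fin n) (Fin n) ℝ :=
  MonoidAlgebra.lift ℝ _ (Word g) (wordEvalHom X)

theorem ncEval_eq_ncEvalAlgHom : ncEval X = ncEvalAlgHom X := by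
  ext p : 1
  rw [ncEvalAlgHom, MonoidAlgebra.lift_apply]
  rfl

theorem wordEval_wordStar (w : Word g) : wordEval X (wordStar w) = (wordEval X w)ᵀ := by
  rw [wordEval, wordStar, FreeMonoid.toList_ofList, wordEval, transpose_list_prod,
    List.map_reverse, List.map_map, List.map_map]
  congr 2
  refine List.map_congr_left fun p _ => ?_
  obtain ⟨i, _ | _⟩ := p <;> simp

theorem ncEval_ncStar (p : NC g) : ncEval X (ncStar p) = (ncEval X p)ᵀ := by
  rw [ncEval, ncStar, MonoidAlgebra.coeff_ofCoeff,
    Finsupp.sum_mapDomain_index (fun w => zero_smul ℝ (wordEval X w))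
      (fun w _ _ => add_smul _ _ (wordEval X w)),
    ncEval, Finsupp.sum, Finsupp.sum, transpose_sum]
  simp only [wordEval_wordStar, transpose_smul]

end Evaluation

theorem ncStar_algebraMap {g : ℕ} (r : ℝ) :
    ncStar (algebraMap ℝ (NC g) r) = algebraMap ℝ (NC g) r := by
  rw [MonoidAlgebra.coe_algebraMap]
  change MonoidAlgebra.ofCoeff (Finsupp.mapDomain wordStar (Finsupp.single 1 _)) = _
  rw [Finsupp.mapDomain_single]
  rfl

theorem matStar_constMat {g m k : ℕ} (B : Matrix (Fin m) (Fin k) ℝ) :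
    matStar (constMat (g := g) B) = constMat Bᵀ :=
  ext fun i j => ncStar_algebraMap (B j i)

section RowEval

variable {g ℓ n : ℕ} (X : Fin g → Matrix (Fin n) (Fin n) ℝ) (v : Fin ℓ → Fin n → ℝ)

theorem rowEval_zero : rowEval X (0 : NCMat g 1 ℓ) v = 0 := by
  simp [rowEval, ncEval_eq_ncEvalAlgHom]

theorem rowEval_add (a b : NCMat g 1 ℓ) : rowEval X (a + b) v = rowEval X a v + rowEval X b v := by
  simp [rowEval, ncEval_eq_ncEvalAlgHom, add_mulVec, Finset.sum_add_distrib]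

theorem rowEval_smul (r : ℝ) (a : NCMat g 1 ℓ) : rowEval X (r • a) v = r • rowEval X a v := by
  simp [rowEval, ncEval_eq_ncEvalAlgHom, smul_mulVec, Finset.smul_sum]

theorem rowEval_leftMul (q : NC g) (a : NCMat g 1 ℓ) :
    rowEval X (leftMul q a) v = ncEval X q *ᵥ rowEval X a v := by
  simp [rowEval, leftMul, ncEval_eq_ncEvalAlgHom, mulVec_sum, mulVec_mulVec]

noncomputable def quadEval : NCMat g ℓ ℓ →ₗ[ℝ] ℝ where
  toFun m := ∑ j, ∑ k, v j ⬝ᵥ ncEval X (m j k) *ᵥ v k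
  map_add' a b := by
    simp [ncEval_eq_ncEvalAlgHom, add_mulVec, Finset.sum_add_distrib]
  map_smul' r a := by
    simp [ncEval_eq_ncEvalAlgHom, smul_mulVec, Finset.mul_sum]

theorem quadEval_matStar_mul (a b : NCMat g 1 ℓ) :
    quadEval X v (matStar a * b) = rowEval X a v ⬝ᵥ rowEval X b v := by
  have entry (j k : Fin ℓ) : v j ⬝ᵥ ncEval X ((matStar a * b) j k) *ᵥ v k =
      ncEval X (a 0 j) *ᵥ v j ⬝ᵥ ncEval X (b 0 k) *ᵥ v k := by
    have : (matStar a * b) j k = ncStar (a 0 j) * b 0 k := by simp [mul_apply, matStar]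
    rw [this, ncEval_eq_ncEvalAlgHom, map_mul, ← ncEval_eq_ncEvalAlgHom, ncEval_ncStar,
      ← mulVec_mulVec, dotProduct_mulVec, vecMul_transpose]
  simp only [quadEval, LinearMap.coe_mk, AddHom.coe_mk, entry]
  rw [rowEval, rowEval, sum_dotProduct]
  simp only [dotProduct_sum]

theorem realPart_le_ker_quadEval {I : Set (NCMat g 1 ℓ)} (hI : ∀ a ∈ I, rowEval X a v = 0) :
    realPart I ≤ LinearMap.ker (quadEval X v) := by
  refine Submodule.span_le.mpr ?_
  rintro _ (⟨B, a, ha, rfl⟩ | ⟨B, a, ha, rfl⟩) <;> rw [SetLike.mem_coe, LinearMap.mem_ker]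
  · rw [← transpose_transpose B, ← matStar_constMat]
    exact (quadEval_matStar_mul X v _ a).trans (by rw [hI a ha, dotProduct_zero])
  · exact (quadEval_matStar_mul X v a _).trans (by rw [hI a ha, zero_dotProduct])

end RowEval

section VanishingModule

variable {g ℓ : ℕ} (V : Set (Σ n : ℕ, (Fin g → Matrix (Fin n) (Fin n) ℝ) × (Fin ℓ → Fin n → ℝ)))

theorem isLeftSubmodule_vanishingModule : IsLeftSubmodule (vanishingModule V) :=
  ⟨fun _ _ => rowEval_zero _ _,
    fun a b ha hb t ht => by rw [rowEval_add, ha t ht, hb t ht, add_zero],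
    fun r a ha t ht => by rw [rowEval_smul, ha t ht, smul_zero],
    fun q a ha t ht => by rw [rowEval_leftMul, ha t ht, mulVec_zero]⟩

theorem isReal_vanishingModule : IsReal (vanishingModule V) := by
  rintro N p hp i ⟨n, X, v⟩ ht
  have hsum : ∑ j, rowEval X (p j) v ⬝ᵥ rowEval X (p j) v = 0 := by
    have hker := realPart_le_ker_quadEval X v (I := vanishingModule V)
      (fun a ha => ha ⟨n, X, v⟩ ht) hp
    simpa only [LinearMap.mem_ker, map_sum, quadEval_matStar_mul] using hker
  have hsq_nonneg (w : Fin n → ℝ) : 0 ≤ w ⬝ᵥ w := Fintype.sum_nonneg fun _ => mul_self_nonneg _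
  exact dotProduct_self_eq_zero.mp
    ((Finset.sum_eq_zero_iff_of_nonneg fun j _ => hsq_nonneg _).mp hsum i (Finset.mem_univ i))

end VanishingModule

/-- for any set `V` of pairs `(X,v)`, the vanishing module `I(V)` is a
real left module. -/
theorem stmt5 {g ℓ : ℕ}
    (V : Set (Σ n : ℕ, (Fin g → Matrix (Fin n) (Fin n) ℝ) × (Fin ℓ → Fin n → ℝ))) :
    IsLeftSubmodule (vanishingModule V) ∧ IsReal (vanishingModule V) :=
  ⟨isLeftSubmodule_vanishingModule V, isReal_vanishingModule V⟩

end NSS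
end

section
/- Let 𝔠 ⊆ R^{1×ℓ}⟨x,x*⟩ be a right chip space. Then 𝔠*·R⟨x,x*⟩·𝔠 = ⨁_{i,j ∈ Γ(𝔠)} E_{ij} ⊗ R⟨x,x*⟩, where Γ(𝔠) = {j : e_j ⊗ 1 ∈ 𝔠}. -/
open scoped BigOperators

namespace NSS

/-- A set of row monomials (indexed by column and word) closed under right chips. -/
def IsRightChipClosed {g ℓ : ℕ} (S : Set (Fin ℓ × Word g)) : Prop :=
  ∀ (j : Fin ℓ) (u v : Word g), (j, u * v) ∈ S → (j, v) ∈ S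

/-- The right chip space spanned by a chip-closed set of monomials. -/
noncomputable def chipSpace {g ℓ : ℕ} (S : Set (Fin ℓ × Word g)) :
    Submodule ℝ (NCMat g 1 ℓ) :=
  Submodule.span ℝ {p | ∃ m ∈ S, p = rowMono m.1 m.2}

/-- The space `ℝ⟨x,x*⟩·𝔠`. -/
noncomputable def algSpanChip {g ℓ : ℕ} (S : Set (Fin ℓ × Word g)) :
    Submodule ℝ (NCMat g 1 ℓ) :=
  Submodule.span ℝ {p | ∃ q : NC g, ∃ c ∈ chipSpace S, p = leftMul q c}

/-- `Γ(𝔠)`: the set of columns `j` with `e_j ⊗ 1 ∈ 𝔠`. -/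
def Gam {g ℓ : ℕ} (S : Set (Fin ℓ × Word g)) : Set (Fin ℓ) :=
  {j | (j, (1 : Word g)) ∈ S}

/-- The direct sum `⨁_{j ∈ Γ} e_j ⊗ ℝ⟨x,x*⟩`, i.e. row polynomials supported on
columns in `Γ`. -/
noncomputable def colSupported {g ℓ : ℕ} (Γ : Set (Fin ℓ)) : Submodule ℝ (NCMat g 1 ℓ) where
  carrier := {p | ∀ j ∉ Γ, p 0 j = 0}
  add_mem' := by
    intro a b ha hb j hj
    simp [Matrix.add_apply, ha j hj, hb j hj]
  zero_mem' := by intro j hj; simp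
  smul_mem' := by
    intro c a ha j hj
    simp [Matrix.smul_apply, ha j hj]

/-- The space `𝔠*·ℝ⟨x,x*⟩·𝔠 ⊆ ℝ^{ℓ×ℓ}⟨x,x*⟩`. -/
noncomputable def midSpan {g ℓ : ℕ} (S : Set (Fin ℓ × Word g)) :
    Submodule ℝ (NCMat g ℓ ℓ) :=
  Submodule.span ℝ
    {p | ∃ c₁ ∈ chipSpace S, ∃ q : NC g, ∃ c₂ ∈ chipSpace S, p = matStar c₁ * leftMul q c₂}

/-- `⨁_{i,j ∈ Γ} E_{ij} ⊗ ℝ⟨x,x*⟩`: `ℓ×ℓ` matrix polynomials supported on `Γ × Γ`. -/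
noncomputable def entrySupported {g ℓ : ℕ} (Γ : Set (Fin ℓ)) : Submodule ℝ (NCMat g ℓ ℓ) where
  carrier := {p | ∀ i j, i ∉ Γ ∨ j ∉ Γ → p i j = 0}
  add_mem' := by
    intro a b ha hb i j hij
    simp [Matrix.add_apply, ha i j hij, hb i j hij]
  zero_mem' := by intro i j hij; simp
  smul_mem' := by
    intro c a ha i j hij
    simp [Matrix.smul_apply, ha i j hij]

/-! Closing `e_j ⊗ w ∈ 𝔠` under right chips gives `e_j ⊗ 1 ∈ 𝔠`, so every element of `𝔠` is
supported on the columns in `Γ(𝔠)`; conversely `(e_i ⊗ 1)^* q (e_j ⊗ 1) = E_{ij} ⊗ q`. -/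

lemma ncStar_zero {g : ℕ} : ncStar (0 : NC g) = 0 := by
  simp [ncStar]

lemma ncStar_one {g : ℕ} : ncStar (1 : NC g) = 1 := by
  simp only [ncStar, MonoidAlgebra.one_def, MonoidAlgebra.coeff_single, Finsupp.mapDomain_single,
    MonoidAlgebra.ofCoeff_single]
  rfl

lemma rowMono_one_apply {g ℓ : ℕ} (j j' : Fin ℓ) :
    rowMono j (1 : Word g) 0 j' = if j' = j then 1 else 0 := rfl

lemma matStar_rowMono_one_mul_leftMul_rowMono_one {g ℓ : ℕ} (i j : Fin ℓ) (q : NC g) :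
    matStar (rowMono i (1 : Word g)) * leftMul q (rowMono j (1 : Word g)) =
      Matrix.single i j q := by
  refine Matrix.ext fun i' j' => ?_
  rw [Matrix.mul_apply, Fin.sum_univ_one]
  simp only [matStar, leftMul, Matrix.of_apply, rowMono_one_apply, Matrix.single_apply,
    @eq_comm _ i, @eq_comm _ j]
  split_ifs <;> simp_all [ncStar_zero, ncStar_one]

lemma chipSpace_le_colSupported {g ℓ : ℕ} {S : Set (Fin ℓ × Word g)} (hS : IsRightChipClosed S) :
    chipSpace S ≤ colSupported (Gam S) := by
  rw [chipSpace, Submodule.span_le]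
  rintro _ ⟨⟨i, w⟩, hm, rfl⟩ j hj
  have hi : i ∈ Gam S := hS i w 1 (by rwa [mul_one])
  simp [rowMono, show j ≠ i from fun h => hj (h ▸ hi)]

lemma matStar_mul_leftMul_mem_entrySupported {g ℓ : ℕ} {Γ : Set (Fin ℓ)}
    {c₁ c₂ : NCMat g 1 ℓ} (h₁ : c₁ ∈ colSupported Γ) (h₂ : c₂ ∈ colSupported Γ) (q : NC g) :
    matStar c₁ * leftMul q c₂ ∈ entrySupported Γ := by
  rintro i j (hi | hj)
  · simp [Matrix.mul_apply, matStar, h₁ i hi, ncStar_zero]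
  · simp [Matrix.mul_apply, leftMul, h₂ j hj]

lemma midSpan_le_entrySupported {g ℓ : ℕ} {S : Set (Fin ℓ × Word g)} (hS : IsRightChipClosed S) :
    midSpan S ≤ entrySupported (Gam S) := by
  rw [midSpan, Submodule.span_le]
  rintro _ ⟨c₁, hc₁, q, c₂, hc₂, rfl⟩
  exact matStar_mul_leftMul_mem_entrySupported
    (chipSpace_le_colSupported hS hc₁) (chipSpace_le_colSupported hS hc₂) q

lemma rowMono_one_mem_chipSpace {g ℓ : ℕ} {S : Set (Fin ℓ × Word g)} {j : Fin ℓ}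
    (hj : j ∈ Gam S) : rowMono j 1 ∈ chipSpace S :=
  Submodule.subset_span ⟨(j, 1), hj, rfl⟩

lemma single_mem_midSpan {g ℓ : ℕ} {S : Set (Fin ℓ × Word g)} {i j : Fin ℓ}
    (hi : i ∈ Gam S) (hj : j ∈ Gam S) (q : NC g) : Matrix.single i j q ∈ midSpan S :=
  Submodule.subset_span ⟨_, rowMono_one_mem_chipSpace hi, q, _, rowMono_one_mem_chipSpace hj,
    (matStar_rowMono_one_mul_leftMul_rowMono_one i j q).symm⟩

lemma entrySupported_le_midSpan {g ℓ : ℕ} (S : Set (Fin ℓ × Word g)) :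
    entrySupported (Gam S) ≤ midSpan S := by
  intro p hp
  rw [Matrix.matrix_eq_sum_single p]
  refine Submodule.sum_mem _ fun i _ => Submodule.sum_mem _ fun j _ => ?_
  by_cases hij : i ∈ Gam S ∧ j ∈ Gam S
  · exact single_mem_midSpan hij.1 hij.2 (p i j)
  · rw [hp i j (not_and_or.mp hij), Matrix.single_zero]
    exact Submodule.zero_mem _

/-- `𝔠*·ℝ⟨x,x*⟩·𝔠 = ⨁_{i,j ∈ Γ(𝔠)} E_{ij} ⊗ ℝ⟨x,x*⟩`. -/
theorem stmt9 {g ℓ : ℕ} (S : Set (Fin ℓ × Word g)) (hS : IsRightChipClosed S) :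
    midSpan S = entrySupported (Gam S) :=
  le_antisymm (midSpan_le_entrySupported hS) (entrySupported_le_midSpan S)

end NSS
end
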